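/- Assume: γ < ω₁ and n < ω; X ⊆ T_{γ+1} is finite with unique drop-downs to γ; {f_τ : τ ∈ I} is a countable indexed family of automorphisms of T↾(γ+1); {I₀} ∪ {J_k : k < n} is a partition of I; A ⊆ I₀ and A_k ⊆ J_k for each k < n are finite; and for each k < n, {f_τ : τ ∈ A ∪ A_k} is separated on X↾γ. Then there exists an indexed family {g_τ : τ ∈ I} of automorphisms of T↾(γ+2) such that: (1) f_τ ⊆ g_τ for all τ ∈ I; (2) for all τ ∈ A ∪ ⋃_{k<n} A_k, X↾γ and X are g_τ-consistent; and (3) for each k < n, {g_τ : τ ∈ I₀ ∪ J_k} is separated. -/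

import Mathlib

noncomputable section

/-- The ordinal `ω₁`. -/
def omega1 : Ordinal := (Cardinal.aleph 1).ord

/-- A normal, infinitely splitting `ω₁`-tree structure on the partial order `α`.
`height x` is the height of `x` (the order type of its set of strict predecessors,
which is linearly ordered by `pred_linear`), and `restrict x β` is the unique node
of height `β` below `x` (for `β ≤ height x`). -/
structure OmegaOneTree (α : Type) [PartialOrder α] where
  height : α → Ordinal
  restrict : α → Ordinal → α
  height_lt_omega1 : ∀ x : α, height x < omega1
  height_strictMono : ∀ {x y : α}, x < y → height x < height y
  pred_linear : ∀ {x y z : α}, y < x → z < x → y ≤ z ∨ z ≤ y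
  restrict_le : ∀ (x : α) {β : Ordinal}, β ≤ height x → restrict x β ≤ x
  height_restrict : ∀ (x : α) {β : Ordinal}, β ≤ height x → height (restrict x β) = β
  restrict_eq : ∀ {x y : α} {β : Ordinal}, y ≤ x → height y = β → restrict x β = y
  level_nonempty : ∀ β : Ordinal, β < omega1 → ∃ x : α, height x = β
  level_countable : ∀ β : Ordinal, {x : α | height x = β}.Countable
  root_exists : ∃ r : α, height r = 0 ∧ ∀ x : α, r ≤ x
  splitting : ∀ x : α, {y : α | x < y ∧ height y = height x + 1}.Infinite
  exists_above : ∀ (x : α) {β : Ordinal}, height x < β → β < omega1 →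
    ∃ y : α, x < y ∧ height y = β
  limit_eq : ∀ {x y : α}, height x = height y → Order.IsSuccLimit (height x) →
    (∀ z : α, z < x ↔ z < y) → x = y

variable {α : Type} [PartialOrder α]

/-- The pair `(g, g')` is an automorphism of `T↾(β+1)` together with its inverse:
both are level preserving on `T↾(β+1)`, mutually inverse there, and strictly
increasing there (hence `g` is an order isomorphism of `T↾(β+1)` onto itself). -/
def IsTreeAuto (T : OmegaOneTree α) (β : Ordinal) (g g' : α → α) : Prop :=
  (∀ x : α, T.height x ≤ β → T.height (g x) = T.height x) ∧
  (∀ x : α, T.height x ≤ β → T.height (g' x) = T.height x) ∧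
  (∀ x : α, T.height x ≤ β → g' (g x) = x) ∧
  (∀ x : α, T.height x ≤ β → g (g' x) = x) ∧
  (∀ x y : α, T.height y ≤ β → x < y → g x < g y) ∧
  (∀ x y : α, T.height y ≤ β → x < y → g' x < g' y)

/-- `(g, g')` extends `(f, f')` on `T↾(γ+1)` (i.e. `f ⊆ g` for automorphisms). -/
def AutoExtends (T : OmegaOneTree α) (γ : Ordinal) (f f' g g' : α → α) : Prop :=
  (∀ x : α, T.height x ≤ γ → g x = f x) ∧ (∀ x : α, T.height x ≤ γ → g' x = f' x)

/-- `X↾lo` and `X` are `g`-consistent: for all `x, y ∈ X`,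
`g(x↾lo) = y↾lo` iff `g(x) = y`. -/
def AutoConsistentSet (T : OmegaOneTree α) (g : α → α) (lo : Ordinal) (X : Set α) : Prop :=
  ∀ x ∈ X, ∀ y ∈ X, (g (T.restrict x lo) = T.restrict y lo ↔ g x = y)

/-- The tuples `a` and `b` (with `a = b↾lo` componentwise) are `g`-consistent:
for all `i, j`, `g(a i) = a j` iff `g(b i) = b j`. -/
def AutoConsistentPair (g : α → α) {n : ℕ} (a b : Fin n → α) : Prop :=
  ∀ i j : Fin n, (g (a i) = a j ↔ g (b i) = b j)

/-- The indexed family of automorphisms `(g, g')` is separated on the injective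
tuple `a`: no member of the tuple satisfies a relation with itself, and each
member satisfies at most one relation `g_τ^m(a k) = a i` with earlier members. -/
def AutoSepTuple {ι : Type} (g g' : ι → α → α) {n : ℕ} (a : Fin n → α) : Prop :=
  (∀ (k : Fin n) (τ : ι), g τ (a k) ≠ a k) ∧
  ∀ (k i₁ i₂ : Fin n) (m₁ m₂ : Bool) (τ₁ τ₂ : ι), i₁ < k → i₂ < k →
    cond m₁ (g τ₁ (a k)) (g' τ₁ (a k)) = a i₁ →
    cond m₂ (g τ₂ (a k)) (g' τ₂ (a k)) = a i₂ →
    i₁ = i₂ ∧ m₁ = m₂ ∧ τ₁ = τ₂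

/-- The indexed family of automorphisms `(g, g')` is separated on the finite set
`X`: some injective tuple listing the elements of `X` witnesses separation. -/
def AutoSepSet {ι : Type} (g g' : ι → α → α) (X : Set α) : Prop :=
  ∃ (n : ℕ) (a : Fin n → α), Function.Injective a ∧ Set.range a = X ∧ AutoSepTuple g g' a

/-- The indexed family of automorphisms `(g, g')` of `T↾(β+1)` is separated:
it is separated on every finite subset of the level `T_β`. -/
def AutoSeparated (T : OmegaOneTree α) (β : Ordinal) {ι : Type} (g g' : ι → α → α) : Prop :=
  ∀ X : Set α, X.Finite → (∀ x ∈ X, T.height x = β) → AutoSepSet g g' X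

/-!
Each `g τ` agrees with `f τ` below `γ + 1` and is built on `T_{γ+1}` by a back-and-forth
construction along an enumeration of all requests "value of `g τ` at `z`" and "value of `g τ⁻¹`
at `z`". It starts from the arrows `x ↦ y` with `x, y ∈ X` forced by consistency for
`τ ∈ A ∪ ⋃ k, A_k`, and answers every other request by an immediate successor of
`f τ^{±1} (z↾γ)` that is neither in `X` nor used before; there is one since `T` is infinitely
splitting and only finitely many nodes have been used. So every arrow outside `X × X` brings in
a fresh node. To separate a finite `X' ⊆ T_{γ+1}`, list `X' ∩ X` in the order witnessing the
separation of `f` on `X↾γ` (the arrows inside `X` are exactly the forced ones), followed by the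
remaining nodes in the order of their first use: such a node is linked to earlier ones only by
the arrow that brought it in.
-/

open Function

section SeparationCombinatorics

variable {ι V W : Type} {g g' : ι → V → V}

theorem AutoSepTuple.comp_orderEmbedding {n m : ℕ} {a : Fin m → V}
    (h : AutoSepTuple g g' a) (e : Fin n ↪o Fin m) : AutoSepTuple g g' (a ∘ e) :=
  ⟨fun k τ => h.1 (e k) τ, fun k i₁ i₂ m₁ m₂ τ₁ τ₂ h₁ h₂ hl₁ hl₂ => by
    obtain ⟨hi, hm, hτ⟩ := h.2 (e k) (e i₁) (e i₂) m₁ m₂ τ₁ τ₂ (e.lt_iff_lt.2 h₁)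
      (e.lt_iff_lt.2 h₂) hl₁ hl₂
    exact ⟨e.injective hi, hm, hτ⟩⟩

theorem AutoSepSet.subset {X Y : Set V} (h : AutoSepSet g g' X) (hYX : Y ⊆ X) :
    AutoSepSet g g' Y := by
  classical
  obtain ⟨n, a, ha, rfl, hsep⟩ := h
  set s := Finset.univ.filter fun j => a j ∈ Y
  refine ⟨s.card, a ∘ s.orderEmbOfFin rfl, ha.comp (s.orderEmbOfFin rfl).injective, ?_,
    hsep.comp_orderEmbedding _⟩
  rw [Set.range_comp, Finset.range_orderEmbOfFin]
  ext y
  simp only [Set.mem_image, Finset.coe_filter, Finset.mem_univ, true_and, s]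
  exact ⟨fun ⟨j, hj, hy⟩ => hy ▸ hj, fun hy => by
    obtain ⟨j, rfl⟩ := hYX hy
    exact ⟨j, hy, rfl⟩⟩

theorem AutoSepSet.insert {Y : Set V} {v : V} (h : AutoSepSet g g' Y) (hv : v ∉ Y)
    (hfix : ∀ τ, g τ v ≠ v)
    (huniq : ∀ u₁ ∈ Y, ∀ u₂ ∈ Y, ∀ (m₁ m₂ : Bool) (τ₁ τ₂ : ι),
      cond m₁ (g τ₁ v) (g' τ₁ v) = u₁ → cond m₂ (g τ₂ v) (g' τ₂ v) = u₂ →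
      u₁ = u₂ ∧ m₁ = m₂ ∧ τ₁ = τ₂) :
    AutoSepSet g g' (insert v Y) := by
  obtain ⟨n, a, ha, rfl, hfix₀, huniq₀⟩ := h
  refine ⟨n + 1, Fin.snoc a v, Fin.snoc_injective_iff.2 ⟨ha, hv⟩, Fin.range_snoc a v, ?_, ?_⟩
  · intro k
    induction k using Fin.lastCases with
    | last => simpa using hfix
    | cast k => simpa using hfix₀ k
  · have hcast : ∀ {i k : Fin (n + 1)}, i < k → ∃ j : Fin n, j.castSucc = i :=
      fun h => Fin.exists_castSucc_eq.2 (Fin.ne_last_of_lt h)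
    intro k i₁ i₂ m₁ m₂ τ₁ τ₂ h₁ h₂ hl₁ hl₂
    induction k using Fin.lastCases with
    | last =>
      obtain ⟨j₁, rfl⟩ := hcast h₁
      obtain ⟨j₂, rfl⟩ := hcast h₂
      simp only [Fin.snoc_last, Fin.snoc_castSucc] at hl₁ hl₂
      obtain ⟨hj, hm, hτ⟩ := huniq _ ⟨j₁, rfl⟩ _ ⟨j₂, rfl⟩ m₁ m₂ τ₁ τ₂ hl₁ hl₂
      exact ⟨congrArg _ (ha hj), hm, hτ⟩
    | cast k =>
      obtain ⟨j₁, rfl⟩ := hcast h₁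
      obtain ⟨j₂, rfl⟩ := hcast h₂
      simp only [Fin.snoc_castSucc] at hl₁ hl₂
      obtain ⟨hj, hm, hτ⟩ := huniq₀ k j₁ j₂ m₁ m₂ τ₁ τ₂ (Fin.castSucc_lt_castSucc_iff.1 h₁)
        (Fin.castSucc_lt_castSucc_iff.1 h₂) hl₁ hl₂
      exact ⟨congrArg _ hj, hm, hτ⟩

theorem AutoSepTuple.of_links {f f' : ι → W → W} {K K' : Set ι} {n : ℕ} {a : Fin n → V}
    {b : Fin n → W}
    (hlink : ∀ τ ∈ K, ∀ (m : Bool) (k i : Fin n), cond m (g τ (a k)) (g' τ (a k)) = a i →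
      τ ∈ K' ∧ cond m (f τ (b k)) (f' τ (b k)) = b i)
    (h : AutoSepTuple (fun τ : K' => f τ) (fun τ : K' => f' τ) b) :
    AutoSepTuple (fun τ : K => g τ) (fun τ : K => g' τ) a := by
  refine ⟨fun k τ hfix => ?_, fun k i₁ i₂ m₁ m₂ τ₁ τ₂ h₁ h₂ hl₁ hl₂ => ?_⟩
  · obtain ⟨hτ, hb⟩ := hlink τ τ.2 true k k hfix
    exact h.1 k ⟨τ, hτ⟩ hb
  · obtain ⟨hτ₁, hb₁⟩ := hlink τ₁ τ₁.2 m₁ k i₁ hl₁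
    obtain ⟨hτ₂, hb₂⟩ := hlink τ₂ τ₂.2 m₂ k i₂ hl₂
    obtain ⟨hi, hm, hτ⟩ := h.2 k i₁ i₂ m₁ m₂ ⟨τ₁, hτ₁⟩ ⟨τ₂, hτ₂⟩ h₁ h₂ hb₁ hb₂
    exact ⟨hi, hm, Subtype.ext (Subtype.mk.inj hτ)⟩

theorem AutoSepSet.of_image {f f' : ι → W → W} {K K' : Set ι} {X : Set V} {π : V → W}
    (hπ : Set.InjOn π X)
    (hlink : ∀ τ ∈ K, ∀ (m : Bool), ∀ x ∈ X, ∀ y ∈ X, cond m (g τ x) (g' τ x) = y →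
      τ ∈ K' ∧ cond m (f τ (π x)) (f' τ (π x)) = π y)
    (h : AutoSepSet (fun τ : K' => f τ) (fun τ : K' => f' τ) (π '' X)) :
    AutoSepSet (fun τ : K => g τ) (fun τ : K => g' τ) X := by
  obtain ⟨n, b, hb, hbX, hsep⟩ := h
  choose c hcX hcb using fun j => (hbX ▸ Set.mem_range_self j : b j ∈ π '' X)
  have hπc : π ∘ c = b := funext hcb
  refine ⟨n, c, Injective.of_comp (f := π) (hπc ▸ hb), ?_, ?_⟩
  · refine Set.Subset.antisymm (Set.range_subset_iff.2 hcX) fun x hx => ?_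
    obtain ⟨j, hj⟩ := hbX.symm ▸ Set.mem_image_of_mem π hx
    exact ⟨j, hπ (hcX j) hx (hcb j ▸ hj)⟩
  · refine hsep.of_links fun τ hτ m k i hki => ?_
    simpa only [hcb] using hlink τ hτ m (c k) (hcX k) (c i) (hcX i) hki

end SeparationCombinatorics

section BackAndForthConstruction

variable {ι V : Type}

/-- The triple `((τ, x), y)` records `g τ x = y`; `arrow b τ z w` records that `g τ` maps `z`
to `w` if `b`, and `w` to `z` otherwise. -/
def arrow (b : Bool) (τ : ι) (z w : V) : (ι × V) × V := cond b ((τ, z), w) ((τ, w), z)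

theorem arrow_not (b : Bool) (τ : ι) (z w : V) : arrow (!b) τ w z = arrow b τ z w := by
  cases b <;> rfl

theorem arrow_eq_arrow_iff {b b' : Bool} {τ τ' : ι} {z w z' w' : V} :
    arrow b τ z w = arrow b' τ' z' w' ↔
      τ = τ' ∧ ((b = b' ∧ z = z' ∧ w = w') ∨ (b ≠ b' ∧ z = w' ∧ w = z')) := by
  cases b <;> cases b' <;>
    simp only [arrow, cond_true, cond_false, Prod.mk.injEq, ne_eq, reduceCtorEq,
      not_true_eq_false, not_false_eq_true] <;> tauto

theorem arrow_injective (b : Bool) (τ : ι) (z : V) : Injective (arrow b τ z) := by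
  cases b <;> intro w w' h <;> simpa [arrow] using h

def endpoints (S : Set ((ι × V) × V)) : Set V := (fun t => t.1.2) '' S ∪ Prod.snd '' S

theorem endpoints_union (S S' : Set ((ι × V) × V)) :
    endpoints (S ∪ S') = endpoints S ∪ endpoints S' := by
  simp only [endpoints, Set.image_union]
  ac_rfl

theorem Set.Finite.endpoints {S : Set ((ι × V) × V)} (h : S.Finite) : (endpoints S).Finite :=
  (h.image _).union (h.image _)

theorem endpoints_mono {S S' : Set ((ι × V) × V)} (h : S ⊆ S') : endpoints S ⊆ endpoints S' :=
  Set.union_subset_union (Set.image_mono h) (Set.image_mono h)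

theorem mem_endpoints_of_arrow_mem {S : Set ((ι × V) × V)} {b : Bool} {τ : ι} {z w : V}
    (h : arrow b τ z w ∈ S) : z ∈ endpoints S ∧ w ∈ endpoints S := by
  cases b
  · exact ⟨Or.inr ⟨_, h, rfl⟩, Or.inl ⟨_, h, rfl⟩⟩
  · exact ⟨Or.inl ⟨_, h, rfl⟩, Or.inr ⟨_, h, rfl⟩⟩

structure BackAndForth (ι V : Type) where
  avoid : Set V
  cand : Bool → ι → V → Set V
  init : Set ((ι × V) × V)
  -- `none` entries let an enumeration exist when there are no requests at all
  enum : ℕ → Option (Bool × ι × V)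

namespace BackAndForth

variable (S : BackAndForth ι V)

open Classical in
def step (R : Set ((ι × V) × V)) : Option (Bool × ι × V) → Set ((ι × V) × V)
  | none => ∅
  | some (b, τ, z) =>
    if h : (∀ w, arrow b τ z w ∉ R) ∧ (S.cand b τ z \ (S.avoid ∪ endpoints R ∪ {z})).Nonempty then
      {arrow b τ z h.2.some}
    else ∅

def stage : ℕ → Set ((ι × V) × V)
  | 0 => S.init
  | n + 1 => stage n ∪ S.step (stage n) (S.enum n)

def limit : Set ((ι × V) × V) := ⋃ n, S.stage n

def seen (n : ℕ) : Set V := S.avoid ∪ endpoints (S.stage n)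

def firstSeen (v : V) : ℕ := sInf {n | v ∈ S.seen n}

open Classical in
def partner (b : Bool) (τ : ι) (z : V) : V :=
  if h : ∃ w, arrow b τ z w ∈ S.limit then h.choose else z

variable {S}

theorem step_subsingleton (R : Set ((ι × V) × V)) (p : Option (Bool × ι × V)) :
    (S.step R p).Subsingleton := by
  rcases p with _ | ⟨b, τ, z⟩
  · exact Set.subsingleton_empty
  · simp only [step]
    split_ifs
    exacts [Set.subsingleton_singleton, Set.subsingleton_empty]

theorem mem_step {R : Set ((ι × V) × V)} {p : Option (Bool × ι × V)} {t : (ι × V) × V}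
    (ht : t ∈ S.step R p) :
    ∃ b τ z w, t = arrow b τ z w ∧ w ∈ S.cand b τ z ∧ (∀ w', arrow b τ z w' ∉ R) ∧
      w ∉ S.avoid ∪ endpoints R ∧ w ≠ z := by
  rcases p with _ | ⟨b, τ, z⟩
  · exact absurd ht (Set.notMem_empty t)
  · simp only [step] at ht
    split_ifs at ht with h
    · have hw := h.2.some_mem
      exact ⟨b, τ, z, _, ht, hw.1, h.1, fun h' => hw.2 (Or.inl h'), fun h' => hw.2 (Or.inr h')⟩
    · exact absurd ht (Set.notMem_empty t)

theorem stage_mono : Monotone S.stage :=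
  monotone_nat_of_le_succ fun n => by simp only [stage, Set.subset_union_left]

theorem stage_subset_limit (n : ℕ) : S.stage n ⊆ S.limit := Set.subset_iUnion _ n

theorem seen_mono : Monotone S.seen :=
  fun _ _ h => Set.union_subset_union_right _ (endpoints_mono (stage_mono h))

theorem mem_limit {t : (ι × V) × V} (ht : t ∈ S.limit) :
    t ∈ S.init ∨ ∃ n, t ∈ S.step (S.stage n) (S.enum n) := by
  obtain ⟨n, hn⟩ := Set.mem_iUnion.1 ht
  induction n with
  | zero => exact Or.inl hn
  | succ n ih => exact hn.elim ih fun h => Or.inr ⟨n, h⟩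

theorem endpoints_stage_finite (hinit : (endpoints S.init).Finite) (n : ℕ) :
    (endpoints (S.stage n)).Finite := by
  induction n with
  | zero => exact hinit
  | succ n ih =>
    rw [stage, endpoints_union]
    exact ih.union (step_subsingleton _ _).finite.endpoints

theorem exists_arrow_mem_limit (havoid : S.avoid.Finite) (hinit : (endpoints S.init).Finite)
    {b : Bool} {τ : ι} {z : V} (hcand : (S.cand b τ z).Infinite)
    (henum : ∃ n, S.enum n = some (b, τ, z)) : ∃ w, arrow b τ z w ∈ S.limit := by
  obtain ⟨n, hn⟩ := henum
  by_cases hold : ∃ w, arrow b τ z w ∈ S.stage n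
  · obtain ⟨w, hw⟩ := hold
    exact ⟨w, stage_subset_limit n hw⟩
  have hfresh : (S.cand b τ z \ (S.avoid ∪ endpoints (S.stage n) ∪ {z})).Nonempty :=
    (hcand.sdiff ((havoid.union (endpoints_stage_finite hinit n)).union
      (Set.finite_singleton z))).nonempty
  have hnew : ∃ w, arrow b τ z w ∈ S.step (S.stage n) (S.enum n) := by
    rw [hn, step, dif_pos ⟨fun w hw => hold ⟨w, hw⟩, hfresh⟩]
    exact ⟨_, rfl⟩
  obtain ⟨w, hw⟩ := hnew
  exact ⟨w, stage_subset_limit (n + 1) (Or.inr hw)⟩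

theorem fresh_of_arrow_mem_step {R : Set ((ι × V) × V)} {p : Option (Bool × ι × V)} {b : Bool}
    {τ : ι} {v u : V} (h : arrow b τ v u ∈ S.step R p) :
    (v ∉ S.avoid ∪ endpoints R ∨ u ∉ S.avoid ∪ endpoints R) ∧ v ≠ u := by
  obtain ⟨b', τ', z, w, heq, -, -, hfresh, hne⟩ := mem_step h
  rcases arrow_eq_arrow_iff.1 heq with ⟨-, ⟨-, rfl, rfl⟩ | ⟨-, rfl, rfl⟩⟩
  exacts [⟨Or.inr hfresh, hne.symm⟩, ⟨Or.inl hfresh, hne⟩]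

theorem arrow_unique
    (hinit : ∀ b τ z w₁ w₂, arrow b τ z w₁ ∈ S.init → arrow b τ z w₂ ∈ S.init → w₁ = w₂)
    {b : Bool} {τ : ι} {z w₁ w₂ : V} (h₁ : arrow b τ z w₁ ∈ S.limit)
    (h₂ : arrow b τ z w₂ ∈ S.limit) : w₁ = w₂ := by
  obtain ⟨n₁, h₁⟩ := Set.mem_iUnion.1 h₁
  obtain ⟨n₂, h₂⟩ := Set.mem_iUnion.1 h₂
  obtain ⟨n, h₁, h₂⟩ : ∃ n, arrow b τ z w₁ ∈ S.stage n ∧ arrow b τ z w₂ ∈ S.stage n :=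
    ⟨_, stage_mono (le_max_left n₁ n₂) h₁, stage_mono (le_max_right n₁ n₂) h₂⟩
  induction n with
  | zero => exact hinit b τ z w₁ w₂ h₁ h₂
  | succ n ih =>
    have old_new : ∀ {w w'}, arrow b τ z w ∈ S.stage n →
        arrow b τ z w' ∉ S.step (S.stage n) (S.enum n) := by
      intro w w' hw hw'
      obtain ⟨b', τ', z', w'', heq, -, hnone, hfresh, -⟩ := mem_step hw'
      rcases arrow_eq_arrow_iff.1 heq with ⟨rfl, ⟨rfl, rfl, -⟩ | ⟨-, rfl, -⟩⟩
      · exact hnone w hw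
      · exact hfresh (Or.inr (mem_endpoints_of_arrow_mem hw).1)
    rcases h₁ with h₁ | h₁ <;> rcases h₂ with h₂ | h₂
    · exact ih h₁ h₂
    · exact (old_new h₁ h₂).elim
    · exact (old_new h₂ h₁).elim
    · exact arrow_injective b τ z (step_subsingleton _ _ h₁ h₂)

theorem arrow_partner_mem {b : Bool} {τ : ι} {z : V} (h : ∃ w, arrow b τ z w ∈ S.limit) :
    arrow b τ z (S.partner b τ z) ∈ S.limit := by
  rw [partner, dif_pos h]
  exact h.choose_spec

theorem partner_eq_iff
    (hinit : ∀ b τ z w₁ w₂, arrow b τ z w₁ ∈ S.init → arrow b τ z w₂ ∈ S.init → w₁ = w₂)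
    {b : Bool} {τ : ι} {z w : V} (h : ∃ w, arrow b τ z w ∈ S.limit) :
    S.partner b τ z = w ↔ arrow b τ z w ∈ S.limit :=
  ⟨fun hw => hw ▸ arrow_partner_mem h, fun hw => arrow_unique hinit (arrow_partner_mem h) hw⟩

theorem mem_init_of_mem_limit {b : Bool} {τ : ι} {z w : V} (h : arrow b τ z w ∈ S.limit)
    (hz : z ∈ S.avoid) (hw : w ∈ S.avoid) : arrow b τ z w ∈ S.init := by
  refine (mem_limit h).resolve_right fun ⟨n, hn⟩ => ?_
  rcases (fresh_of_arrow_mem_step hn).1 with h' | h'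
  exacts [h' (Or.inl hz), h' (Or.inl hw)]

theorem exists_arrow_mem_step (hinit : endpoints S.init ⊆ S.avoid) {b : Bool} {τ : ι} {v u : V}
    (h : arrow b τ v u ∈ S.limit) (hv : v ∉ S.avoid) :
    ∃ n, arrow b τ v u ∈ S.step (S.stage n) (S.enum n) :=
  (mem_limit h).resolve_left fun h' => hv (hinit (mem_endpoints_of_arrow_mem h').1)

theorem arrow_self_notMem_limit (hinit : endpoints S.init ⊆ S.avoid) {b : Bool} {τ : ι} {v : V}
    (hv : v ∉ S.avoid) : arrow b τ v v ∉ S.limit := fun h => by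
  obtain ⟨n, hn⟩ := exists_arrow_mem_step hinit h hv
  exact (fresh_of_arrow_mem_step hn).2 rfl

theorem firstSeen_eq_zero {v : V} (hv : v ∈ S.avoid) : S.firstSeen v = 0 :=
  Nat.eq_zero_of_le_zero (Nat.sInf_le (Or.inl hv))

theorem firstSeen_eq_succ {v : V} {n : ℕ} (h₀ : v ∉ S.seen n) (h₁ : v ∈ S.seen (n + 1)) :
    S.firstSeen v = n + 1 := by
  refine le_antisymm (Nat.sInf_le h₁) (Nat.succ_le_of_lt (lt_of_not_ge fun hle => ?_))
  exact h₀ (seen_mono hle (Nat.sInf_mem (s := {n | v ∈ S.seen n}) ⟨_, h₁⟩))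

/-- An arrow born at step `n` has an endpoint first seen at step `n + 1`; so if `v` was seen no
earlier than `u`, it is `v`. -/
theorem firstSeen_eq_of_arrow_mem_step {n : ℕ} {b : Bool} {τ : ι} {v u : V}
    (h : arrow b τ v u ∈ S.step (S.stage n) (S.enum n)) (hu : S.firstSeen u ≤ S.firstSeen v) :
    S.firstSeen v = n + 1 := by
  have hnew : arrow b τ v u ∈ S.stage (n + 1) := Or.inr h
  obtain ⟨hv, hu'⟩ := mem_endpoints_of_arrow_mem hnew
  rcases (fresh_of_arrow_mem_step h).1 with hfresh | hfresh
  · exact firstSeen_eq_succ hfresh (Or.inr hv)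
  · exact le_antisymm (Nat.sInf_le (Or.inr hv)) (firstSeen_eq_succ hfresh (Or.inr hu') ▸ hu)

theorem arrow_eq_of_firstSeen_le (hinit : endpoints S.init ⊆ S.avoid) {b₁ b₂ : Bool} {τ₁ τ₂ : ι}
    {v u₁ u₂ : V} (hv : v ∉ S.avoid) (h₁ : arrow b₁ τ₁ v u₁ ∈ S.limit)
    (h₂ : arrow b₂ τ₂ v u₂ ∈ S.limit) (hu₁ : S.firstSeen u₁ ≤ S.firstSeen v)
    (hu₂ : S.firstSeen u₂ ≤ S.firstSeen v) : arrow b₁ τ₁ v u₁ = arrow b₂ τ₂ v u₂ := by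
  obtain ⟨n₁, hn₁⟩ := exists_arrow_mem_step hinit h₁ hv
  obtain ⟨n₂, hn₂⟩ := exists_arrow_mem_step hinit h₂ hv
  obtain rfl : n₁ = n₂ := Nat.succ_injective
    ((firstSeen_eq_of_arrow_mem_step hn₁ hu₁).symm.trans (firstSeen_eq_of_arrow_mem_step hn₂ hu₂))
  exact step_subsingleton _ _ hn₁ hn₂

end BackAndForth

end BackAndForthConstruction

theorem Set.Countable.exists_enum {β : Type} {s : Set β} (hs : s.Countable) :
    ∃ E : ℕ → Option β, ∀ x ∈ s, ∃ n, E n = some x := by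
  obtain ⟨E, hE⟩ := Set.countable_iff_exists_subset_range.1 (hs.image some)
  exact ⟨E, fun x hx => hE (Set.mem_image_of_mem some hx)⟩

namespace OmegaOneTree

variable (T : OmegaOneTree α)

theorem restrict_lt {x : α} {β : Ordinal} (h : β < T.height x) : T.restrict x β < x :=
  (T.restrict_le x h.le).lt_of_ne fun heq => h.ne (by rw [← T.height_restrict x h.le, heq])

theorem le_restrict_of_lt {x y : α} {β : Ordinal} (hxy : x < y) (hx : T.height x ≤ β)
    (hy : β ≤ T.height y) : x ≤ T.restrict y β := by
  rcases (T.restrict_le y hy).eq_or_lt with h | h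
  · rw [h]
    exact hxy.le
  rcases T.pred_linear hxy h with h' | h'
  · exact h'
  rcases h'.eq_or_lt with h'' | h''
  · exact h''.ge
  have := T.height_strictMono h''
  rw [T.height_restrict y hy] at this
  exact absurd hx (not_le.2 this)

end OmegaOneTree

theorem isTreeAuto_iff_forall_bool {T : OmegaOneTree α} {β : Ordinal} {g g' : α → α} :
    IsTreeAuto T β g g' ↔ ∀ b : Bool,
      (∀ x, T.height x ≤ β → T.height (cond b g g' x) = T.height x) ∧
      (∀ x, T.height x ≤ β → cond (!b) g g' (cond b g g' x) = x) ∧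
      (∀ x y, T.height y ≤ β → x < y → cond b g g' x < cond b g g' y) := by
  refine ⟨fun ⟨h₁, h₂, h₃, h₄, h₅, h₆⟩ b => ?_, fun h => ?_⟩
  · cases b
    exacts [⟨h₂, h₄, h₆⟩, ⟨h₁, h₃, h₅⟩]
  · obtain ⟨h₁, h₃, h₅⟩ := h true
    obtain ⟨h₂, h₄, h₆⟩ := h false
    exact ⟨h₁, h₂, h₃, h₄, h₅, h₆⟩

theorem IsTreeAuto.cond_eq_iff {T : OmegaOneTree α} {β : Ordinal} {g g' : α → α}
    (hg : IsTreeAuto T β g g') (b : Bool) {u v : α} (hu : T.height u ≤ β)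
    (hv : T.height v ≤ β) : cond b g g' u = v ↔ cond (!b) g g' v = u := by
  have hb := isTreeAuto_iff_forall_bool.1 hg
  constructor
  · rintro rfl
    exact (hb b).2.1 u hu
  · rintro rfl
    simpa using (hb (!b)).2.1 v hv

section Extension

variable {ι : Type} (T : OmegaOneTree α) (γ : Ordinal) (f f' : ι → α → α) (X : Set α) (B : Set ι)

def Coherent (t : (ι × α) × α) : Prop :=
  T.height t.1.2 = γ + 1 ∧ T.height t.2 = γ + 1 ∧ f t.1.1 (T.restrict t.1.2 γ) = T.restrict t.2 γ

def consistencyGraph : Set ((ι × α) × α) :=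
  {t | t.1.1 ∈ B ∧ t.1.2 ∈ X ∧ t.2 ∈ X ∧ Coherent T γ f t}

theorem exists_levelEnum (ι : Type) [Countable ι] :
    ∃ E : ℕ → Option (Bool × ι × α), ∀ b τ z, T.height z = γ + 1 → ∃ n, E n = some (b, τ, z) := by
  have hcount : {p : Bool × ι × α | T.height p.2.2 = γ + 1}.Countable :=
    (Set.countable_univ.prod (Set.countable_univ.prod (T.level_countable (γ + 1)))).mono
      fun p hp => Set.mk_mem_prod (Set.mem_univ _) (Set.mk_mem_prod (Set.mem_univ _) hp)
  obtain ⟨E, hE⟩ := hcount.exists_enum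
  exact ⟨E, fun b τ z hz => hE (b, τ, z) hz⟩

def levelEnum (ι : Type) [Countable ι] : ℕ → Option (Bool × ι × α) :=
  (exists_levelEnum T γ ι).choose

def scheme [Countable ι] : BackAndForth ι α where
  avoid := X
  cand b τ z :=
    {y | T.height z = γ + 1 ∧ T.height y = γ + 1 ∧ cond b (f τ) (f' τ) (T.restrict z γ) < y}
  init := consistencyGraph T γ f X B
  enum := levelEnum T γ ι

def extension [Countable ι] (b : Bool) (τ : ι) (x : α) : α :=
  if T.height x ≤ γ then cond b (f τ) (f' τ) x else (scheme T γ f f' X B).partner b τ x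

variable {T γ f f' X B}

theorem height_restrict_of_height_eq {z : α} (hz : T.height z = γ + 1) :
    T.height (T.restrict z γ) = γ :=
  T.height_restrict z (hz ▸ (lt_add_one γ).le)

theorem height_cond_restrict (hf : ∀ τ, IsTreeAuto T γ (f τ) (f' τ)) (b : Bool) (τ : ι) {z : α}
    (hz : T.height z = γ + 1) : T.height (cond b (f τ) (f' τ) (T.restrict z γ)) = γ := by
  rw [(isTreeAuto_iff_forall_bool.1 (hf τ) b).1 _ (height_restrict_of_height_eq hz).le,
    height_restrict_of_height_eq hz]

theorem coherent_arrow_iff (hf : ∀ τ, IsTreeAuto T γ (f τ) (f' τ)) {b : Bool} {τ : ι} {z w : α} :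
    Coherent T γ f (arrow b τ z w) ↔ T.height z = γ + 1 ∧ T.height w = γ + 1 ∧
      cond b (f τ) (f' τ) (T.restrict z γ) = T.restrict w γ := by
  cases b
  · refine ⟨fun ⟨hw, hz, h⟩ => ⟨hz, hw, ?_⟩, fun ⟨hz, hw, h⟩ => ⟨hw, hz, ?_⟩⟩
    · exact ((hf τ).cond_eq_iff false (height_restrict_of_height_eq hz).le
        (height_restrict_of_height_eq hw).le).2 h
    · exact ((hf τ).cond_eq_iff false (height_restrict_of_height_eq hz).le
        (height_restrict_of_height_eq hw).le).1 h
  · exact Iff.rfl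

theorem mem_consistencyGraph_arrow {b : Bool} {τ : ι} {z w : α} :
    arrow b τ z w ∈ consistencyGraph T γ f X B ↔
      τ ∈ B ∧ z ∈ X ∧ w ∈ X ∧ Coherent T γ f (arrow b τ z w) := by
  cases b
  · simp only [consistencyGraph, arrow, cond_false, Set.mem_ofPred]
    tauto
  · exact Iff.rfl

theorem endpoints_consistencyGraph_subset : endpoints (consistencyGraph T γ f X B) ⊆ X := by
  rintro v (⟨t, ht, rfl⟩ | ⟨t, ht, rfl⟩)
  exacts [ht.2.1, ht.2.2.1]

theorem consistencyGraph_functional (hf : ∀ τ, IsTreeAuto T γ (f τ) (f' τ))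
    (hXdrop : Set.InjOn (fun x => T.restrict x γ) X) (b : Bool) (τ : ι) (z w₁ w₂ : α)
    (h₁ : arrow b τ z w₁ ∈ consistencyGraph T γ f X B)
    (h₂ : arrow b τ z w₂ ∈ consistencyGraph T γ f X B) : w₁ = w₂ := by
  obtain ⟨-, -, hw₁, hc₁⟩ := mem_consistencyGraph_arrow.1 h₁
  obtain ⟨-, -, hw₂, hc₂⟩ := mem_consistencyGraph_arrow.1 h₂
  exact hXdrop hw₁ hw₂
    (((coherent_arrow_iff hf).1 hc₁).2.2.symm.trans ((coherent_arrow_iff hf).1 hc₂).2.2)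

variable [Countable ι]

theorem coherent_of_mem_limit (hf : ∀ τ, IsTreeAuto T γ (f τ) (f' τ)) {t : (ι × α) × α}
    (ht : t ∈ (scheme T γ f f' X B).limit) : Coherent T γ f t := by
  rcases BackAndForth.mem_limit ht with h | ⟨n, hn⟩
  · exact h.2.2.2
  · obtain ⟨b, τ, z, w, rfl, ⟨hz, hw, hlt⟩, -⟩ := BackAndForth.mem_step hn
    refine (coherent_arrow_iff hf).2 ⟨hz, hw, (T.restrict_eq hlt.le ?_).symm⟩
    exact height_cond_restrict hf b τ hz

theorem scheme_exists_arrow_mem_limit (hf : ∀ τ, IsTreeAuto T γ (f τ) (f' τ)) (hXfin : X.Finite)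
    (b : Bool) (τ : ι) {z : α} (hz : T.height z = γ + 1) :
    ∃ w, arrow b τ z w ∈ (scheme T γ f f' X B).limit := by
  refine BackAndForth.exists_arrow_mem_limit hXfin
    (hXfin.subset endpoints_consistencyGraph_subset) ?_
    ((exists_levelEnum T γ ι).choose_spec b τ z hz)
  have hu := height_cond_restrict hf b τ hz
  refine (T.splitting (cond b (f τ) (f' τ) (T.restrict z γ))).mono fun y hy => ?_
  exact ⟨hz, hu ▸ hy.2, hy.1⟩

theorem extension_of_height_le {b : Bool} {τ : ι} {x : α} (hx : T.height x ≤ γ) :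
    extension T γ f f' X B b τ x = cond b (f τ) (f' τ) x :=
  if_pos hx

theorem extension_eq_iff (hf : ∀ τ, IsTreeAuto T γ (f τ) (f' τ)) (hXfin : X.Finite)
    (hXdrop : Set.InjOn (fun x => T.restrict x γ) X) {b : Bool} {τ : ι} {x y : α}
    (hx : T.height x = γ + 1) :
    extension T γ f f' X B b τ x = y ↔ arrow b τ x y ∈ (scheme T γ f f' X B).limit := by
  rw [extension, if_neg (hx ▸ not_le.2 (lt_add_one γ))]
  exact BackAndForth.partner_eq_iff (consistencyGraph_functional hf hXdrop)
    (scheme_exists_arrow_mem_limit hf hXfin b τ hx)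

theorem extension_spec (hf : ∀ τ, IsTreeAuto T γ (f τ) (f' τ)) (hXfin : X.Finite)
    (hXdrop : Set.InjOn (fun x => T.restrict x γ) X) (b : Bool) (τ : ι) {x : α}
    (hx : T.height x = γ + 1) :
    T.height (extension T γ f f' X B b τ x) = γ + 1 ∧
      cond b (f τ) (f' τ) (T.restrict x γ) = T.restrict (extension T γ f f' X B b τ x) γ ∧
      extension T γ f f' X B (!b) τ (extension T γ f f' X B b τ x) = x := by
  have hmem := (extension_eq_iff (B := B) (b := b) (τ := τ) hf hXfin hXdrop hx).1 rfl
  obtain ⟨-, hw, hrel⟩ := (coherent_arrow_iff hf).1 (coherent_of_mem_limit hf hmem)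
  refine ⟨hw, hrel, (extension_eq_iff hf hXfin hXdrop hw).2 ?_⟩
  rwa [arrow_not]

theorem isTreeAuto_extension (hf : ∀ τ, IsTreeAuto T γ (f τ) (f' τ)) (hXfin : X.Finite)
    (hXdrop : Set.InjOn (fun x => T.restrict x γ) X) (τ : ι) :
    IsTreeAuto T (γ + 1) (extension T γ f f' X B true τ) (extension T γ f f' X B false τ) := by
  refine isTreeAuto_iff_forall_bool.2 fun b => ?_
  obtain ⟨hfh, hfinv, hfmono⟩ := isTreeAuto_iff_forall_bool.1 (hf τ) b
  have hcond : ∀ b : Bool, cond b (extension T γ f f' X B true τ)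
      (extension T γ f f' X B false τ) = extension T γ f f' X B b τ := by
    intro b
    cases b <;> rfl
  simp only [hcond]
  have hcases : ∀ {x : α}, T.height x ≤ γ + 1 → T.height x ≤ γ ∨ T.height x = γ + 1 :=
    fun hx => hx.lt_or_eq.imp_left Order.lt_add_one_iff.1
  refine ⟨fun x hx => ?_, fun x hx => ?_, fun x y hy hxy => ?_⟩
  · rcases hcases hx with hx | hx
    · rw [extension_of_height_le hx, hfh x hx]
    · rw [(extension_spec hf hXfin hXdrop b τ hx).1, hx]
  · rcases hcases hx with hx | hx
    · rw [extension_of_height_le hx, extension_of_height_le ((hfh x hx).trans_le hx)]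
      exact hfinv x hx
    · exact (extension_spec hf hXfin hXdrop b τ hx).2.2
  · rcases hcases hy with hy' | hy'
    · rw [extension_of_height_le hy',
        extension_of_height_le ((T.height_strictMono hxy).le.trans hy')]
      exact hfmono x y hy' hxy
    have hx : T.height x ≤ γ := Order.lt_add_one_iff.1 (hy' ▸ T.height_strictMono hxy)
    obtain ⟨hw, hrel, -⟩ := extension_spec hf hXfin hXdrop b τ hy'
    rw [extension_of_height_le hx]
    calc cond b (f τ) (f' τ) x
        ≤ cond b (f τ) (f' τ) (T.restrict y γ) := by
          rcases (T.le_restrict_of_lt hxy hx (hy' ▸ (lt_add_one γ).le)).eq_or_lt with h | h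
          · rw [h]
          · exact (hfmono _ _ (height_restrict_of_height_eq hy').le h).le
      _ = T.restrict (extension T γ f f' X B b τ y) γ := hrel
      _ < extension T γ f f' X B b τ y := T.restrict_lt (hw ▸ lt_add_one γ)

theorem extension_eq_iff_of_mem (hf : ∀ τ, IsTreeAuto T γ (f τ) (f' τ)) (hXfin : X.Finite)
    (hXlev : ∀ x ∈ X, T.height x = γ + 1) (hXdrop : Set.InjOn (fun x => T.restrict x γ) X)
    (b : Bool) (τ : ι) {x y : α} (hx : x ∈ X) (hy : y ∈ X) :
    extension T γ f f' X B b τ x = y ↔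
      τ ∈ B ∧ cond b (f τ) (f' τ) (T.restrict x γ) = T.restrict y γ := by
  rw [extension_eq_iff hf hXfin hXdrop (hXlev x hx)]
  constructor
  · intro h
    obtain ⟨hB, -, -, hc⟩ :=
      mem_consistencyGraph_arrow.1 (BackAndForth.mem_init_of_mem_limit h hx hy)
    exact ⟨hB, ((coherent_arrow_iff hf).1 hc).2.2⟩
  · rintro ⟨hB, h⟩
    refine BackAndForth.stage_subset_limit 0 (mem_consistencyGraph_arrow.2 ⟨hB, hx, hy, ?_⟩)
    exact (coherent_arrow_iff hf).2 ⟨hXlev x hx, hXlev y hy, h⟩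

theorem autoSepSet_insert_extension (hf : ∀ τ, IsTreeAuto T γ (f τ) (f' τ)) (hXfin : X.Finite)
    (hXdrop : Set.InjOn (fun x => T.restrict x γ) X) {K : Set ι} {Y : Set α} {v : α}
    (hv : T.height v = γ + 1) (hvX : v ∉ X) (hvY : v ∉ Y)
    (hfirst : ∀ u ∈ Y, (scheme T γ f f' X B).firstSeen u ≤ (scheme T γ f f' X B).firstSeen v)
    (hY : AutoSepSet (fun τ : K => extension T γ f f' X B true τ)
      (fun τ : K => extension T γ f f' X B false τ) Y) :
    AutoSepSet (fun τ : K => extension T γ f f' X B true τ)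
      (fun τ : K => extension T γ f f' X B false τ) (insert v Y) := by
  have hlink : ∀ (m : Bool) (τ : ι) (u : α),
      cond m (extension T γ f f' X B true τ v) (extension T γ f f' X B false τ v) = u →
      arrow m τ v u ∈ (scheme T γ f f' X B).limit := fun m τ u h =>
    (extension_eq_iff hf hXfin hXdrop hv).1 (by cases m <;> exact h)
  refine hY.insert hvY (fun τ h => ?_) fun u₁ hu₁ u₂ hu₂ m₁ m₂ τ₁ τ₂ h₁ h₂ => ?_
  · exact BackAndForth.arrow_self_notMem_limit endpoints_consistencyGraph_subset hvX
      (hlink true τ v h)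
  · have heq := BackAndForth.arrow_eq_of_firstSeen_le endpoints_consistencyGraph_subset hvX
      (hlink m₁ τ₁ u₁ h₁) (hlink m₂ τ₂ u₂ h₂) (hfirst u₁ hu₁) (hfirst u₂ hu₂)
    rcases arrow_eq_arrow_iff.1 heq with ⟨hτ, ⟨hm, -, hu⟩ | ⟨-, rfl, -⟩⟩
    · exact ⟨hu, hm, Subtype.ext hτ⟩
    · exact absurd hu₂ hvY

theorem autoSeparated_extension (hf : ∀ τ, IsTreeAuto T γ (f τ) (f' τ)) (hXfin : X.Finite)
    (hXdrop : Set.InjOn (fun x => T.restrict x γ) X) (K : Set ι)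
    (hK : AutoSepSet (fun τ : K => extension T γ f f' X B true τ)
      (fun τ : K => extension T γ f f' X B false τ) X) :
    AutoSeparated T (γ + 1) (fun τ : K => extension T γ f f' X B true τ)
      (fun τ : K => extension T γ f f' X B false τ) := by
  classical
  intro X' hX'fin hX'lev
  suffices key : ∀ s : Finset α, ↑s ⊆ X' \ X →
      AutoSepSet (fun τ : K => extension T γ f f' X B true τ)
        (fun τ : K => extension T γ f f' X B false τ) (X ∩ X' ∪ ↑s) by
    have := key hX'fin.sdiff.toFinset (by rw [Set.Finite.coe_toFinset])
    rwa [Set.Finite.coe_toFinset, Set.inter_comm, Set.inter_union_sdiff] at this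
  intro s
  induction s using Finset.induction_on_max_value (scheme T γ f f' X B).firstSeen with
  | empty => exact fun _ => by simpa using hK.subset Set.inter_subset_left
  | insert v s hvs hmax ih =>
    rw [Finset.coe_insert, Set.insert_subset_iff, Set.union_insert]
    rintro ⟨⟨hvX', hvX⟩, hs⟩
    refine autoSepSet_insert_extension hf hXfin hXdrop (hX'lev v hvX') hvX
      (fun h => h.elim (fun h => hvX h.1) hvs) (fun u hu => ?_) (ih hs)
    rcases hu with hu | hu
    · exact (BackAndForth.firstSeen_eq_zero hu.1).trans_le (Nat.zero_le _)
    · exact hmax u hu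

end Extension

theorem exists_extension {ι : Type} [Countable ι] {T : OmegaOneTree α} {γ : Ordinal}
    {f f' : ι → α → α} {X : Set α} (hf : ∀ τ, IsTreeAuto T γ (f τ) (f' τ)) (hXfin : X.Finite)
    (hXlev : ∀ x ∈ X, T.height x = γ + 1) (hXdrop : Set.InjOn (fun x => T.restrict x γ) X)
    (B : Set ι) :
    ∃ g g' : ι → α → α,
      (∀ τ, IsTreeAuto T (γ + 1) (g τ) (g' τ)) ∧
      (∀ τ, AutoExtends T γ (f τ) (f' τ) (g τ) (g' τ)) ∧
      (∀ (b : Bool) τ, ∀ x ∈ X, ∀ y ∈ X, cond b (g τ x) (g' τ x) = y ↔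
        τ ∈ B ∧ cond b (f τ (T.restrict x γ)) (f' τ (T.restrict x γ)) = T.restrict y γ) ∧
      ∀ K : Set ι, AutoSepSet (fun τ : K => g τ) (fun τ : K => g' τ) X →
        AutoSeparated T (γ + 1) (fun τ : K => g τ) (fun τ : K => g' τ) :=
  ⟨extension T γ f f' X B true, extension T γ f f' X B false,
    isTreeAuto_extension hf hXfin hXdrop,
    fun _ => ⟨fun _ => extension_of_height_le, fun _ => extension_of_height_le⟩,
    fun b τ x hx y hy => by
      cases b <;> exact extension_eq_iff_of_mem hf hXfin hXlev hXdrop _ τ hx hy,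
    autoSeparated_extension hf hXfin hXdrop⟩

theorem union_iUnion_inter_subset {ι κ : Type} {A I₀ : Set ι} {J Ak : κ → Set ι}
    (hdisj₀ : ∀ k, Disjoint I₀ (J k)) (hdisjJ : ∀ k l, k ≠ l → Disjoint (J k) (J l))
    (hAk : ∀ k, Ak k ⊆ J k) (k : κ) : (A ∪ ⋃ j, Ak j) ∩ (I₀ ∪ J k) ⊆ A ∪ Ak k := by
  rintro τ ⟨hA | hAj, hK⟩
  · exact Or.inl hA
  obtain ⟨j, hj⟩ := Set.mem_iUnion.1 hAj
  rcases eq_or_ne j k with rfl | hjk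
  · exact Or.inr hj
  · have hτj := hAk j hj
    exact (hK.elim (fun h => Set.disjoint_left.1 (hdisj₀ j) h hτj)
      (fun h => Set.disjoint_left.1 (hdisjJ j k hjk) hτj h)).elim

theorem auto_family_extension_partitioned_general
    (T : OmegaOneTree α) (γ : Ordinal) (nn : ℕ)
    (X : Set α) (hXfin : X.Finite) (hXlev : ∀ x ∈ X, T.height x = γ + 1)
    (hXdrop : Set.InjOn (fun x => T.restrict x γ) X)
    {ι : Type} [Countable ι] (f f' : ι → α → α)
    (hf : ∀ τ, IsTreeAuto T γ (f τ) (f' τ))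
    (I₀ : Set ι) (J : Fin nn → Set ι)
    (hdisj₀ : ∀ k, Disjoint I₀ (J k))
    (hdisjJ : ∀ k l : Fin nn, k ≠ l → Disjoint (J k) (J l))
    (A : Set ι)
    (Ak : Fin nn → Set ι) (hAksub : ∀ k, Ak k ⊆ J k)
    (hsep : ∀ k : Fin nn,
      AutoSepSet (fun τ : ↥(A ∪ Ak k) => f τ.1) (fun τ : ↥(A ∪ Ak k) => f' τ.1)
        ((fun x => T.restrict x γ) '' X)) :
    ∃ g g' : ι → α → α,
      (∀ τ, IsTreeAuto T (γ + 1) (g τ) (g' τ)) ∧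
      (∀ τ, AutoExtends T γ (f τ) (f' τ) (g τ) (g' τ)) ∧
      (∀ τ ∈ A ∪ ⋃ k, Ak k, AutoConsistentSet T (g τ) γ X) ∧
      (∀ k : Fin nn,
        AutoSeparated T (γ + 1)
          (fun τ : ↥(I₀ ∪ J k) => g τ.1) (fun τ : ↥(I₀ ∪ J k) => g' τ.1)) := by
  obtain ⟨g, g', hauto, hext, hX, hsepX⟩ :=
    exists_extension hf hXfin hXlev hXdrop (A ∪ ⋃ k, Ak k)
  refine ⟨g, g', hauto, hext, fun τ hτ x hx y hy => ?_, fun k => hsepX _ ?_⟩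
  · rw [(hext τ).1 _ (height_restrict_of_height_eq (hXlev x hx)).le]
    exact ((hX true τ x hx y hy).trans (and_iff_right hτ)).symm
  · refine AutoSepSet.of_image hXdrop (fun τ hτ m x hx y hy hxy => ?_) (hsep k)
    obtain ⟨hτB, hrel⟩ := (hX m τ x hx y hy).1 hxy
    exact ⟨union_iUnion_inter_subset hdisj₀ hdisjJ hAksub k ⟨hτB, hτ⟩, hrel⟩

/-- Lemma 5.41: one-step extension of a countable family of automorphisms indexed
by a set partitioned as `{I₀} ∪ {J k : k < nn}`, which is consistent on `X` for the
indices in `A ∪ ⋃ k, Ak k` and such that each subfamily indexed by `I₀ ∪ J k`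
is separated. -/
theorem auto_family_extension_partitioned
    (T : OmegaOneTree α) (γ : Ordinal) (hγ : γ < omega1) (nn : ℕ)
    (X : Set α) (hXfin : X.Finite) (hXlev : ∀ x ∈ X, T.height x = γ + 1)
    (hXdrop : Set.InjOn (fun x => T.restrict x γ) X)
    {ι : Type} [Countable ι] (f f' : ι → α → α)
    (hf : ∀ τ, IsTreeAuto T γ (f τ) (f' τ))
    (I₀ : Set ι) (J : Fin nn → Set ι)
    (hcover : (I₀ ∪ ⋃ k, J k) = Set.univ)
    (hdisj₀ : ∀ k, Disjoint I₀ (J k))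
    (hdisjJ : ∀ k l : Fin nn, k ≠ l → Disjoint (J k) (J l))
    (A : Set ι) (hAfin : A.Finite) (hAsub : A ⊆ I₀)
    (Ak : Fin nn → Set ι) (hAkfin : ∀ k, (Ak k).Finite) (hAksub : ∀ k, Ak k ⊆ J k)
    (hsep : ∀ k : Fin nn,
      AutoSepSet (fun τ : ↥(A ∪ Ak k) => f τ.1) (fun τ : ↥(A ∪ Ak k) => f' τ.1)
        ((fun x => T.restrict x γ) '' X)) :
    ∃ g g' : ι → α → α,
      (∀ τ, IsTreeAuto T (γ + 1) (g τ) (g' τ)) ∧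
      (∀ τ, AutoExtends T γ (f τ) (f' τ) (g τ) (g' τ)) ∧
      (∀ τ ∈ A ∪ ⋃ k, Ak k, AutoConsistentSet T (g τ) γ X) ∧
      (∀ k : Fin nn,
        AutoSeparated T (γ + 1)
          (fun τ : ↥(I₀ ∪ J k) => g τ.1) (fun τ : ↥(I₀ ∪ J k) => g' τ.1)) :=
  auto_family_extension_partitioned_general T γ nn X hXfin hXlev hXdrop f f' hf I₀ J hdisj₀ hdisjJ A
    Ak hAksub hsep
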